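/- For fixed positive semidefinite Y ∈ M_ℓ(ℂ), the map X ↦ tgm(X,Y) is concave on the cone of positive semidefinite ℓ×ℓ complex matrices: tgm(tX₁ + (1−t)X₂, Y) ≥ t·tgm(X₁,Y) + (1−t)·tgm(X₂,Y) for t ∈ [0,1]. -/

import Mathlib

/-!
`√X Y √X = (√X √Y) (√Y √X)` and `√Y X √Y = (√Y √X) (√X √Y)` have the same characteristic
polynomial, hence the same eigenvalues, so `tgm(X, Y) = tgm(Y, X) = tr √(√Y X √Y)`; as
`X ↦ √Y X √Y` is linear, it suffices that `A ↦ tr √A` is concave on the positive semidefinite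
cone. Let a unitary `W` diagonalise `M = aP + bQ`. The eigenvalues of `M` are `a pᵢ + b qᵢ`,
where `pᵢ`, `qᵢ` are the diagonal entries of `W⋆PW`, `W⋆QW`, so concavity of `√` gives
`tr √M ≥ a ∑ √pᵢ + b ∑ √qᵢ`. Finally `∑ √pᵢ ≥ tr √P` by Jensen: if `U` diagonalises `P`,
each `pᵢ` is the average of the eigenvalues of `P` with weights `|(U⋆W)ⱼᵢ|²`, and these
weights form a doubly stochastic matrix because `U⋆W` is unitary.
-/

open Matrix
open scoped ComplexOrder

/-- The positive semidefinite square root of a positive semidefinite matrix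
(the definition `Matrix.PosSemidef.sqrt` of the older Mathlib, removed since). -/
noncomputable def Matrix.PosSemidef.sqrt {𝕜 : Type*} [RCLike 𝕜] {n : Type*} [Fintype n]
    [DecidableEq n] {A : Matrix n n 𝕜} (hA : A.PosSemidef) : Matrix n n 𝕜 :=
  hA.1.eigenvectorUnitary.1 * diagonal ((↑) ∘ (Real.sqrt ∘ hA.1.eigenvalues)) *
    (star hA.1.eigenvectorUnitary : Matrix n n 𝕜)

theorem Matrix.PosSemidef.posSemidef_sqrt {n : Type*} [Fintype n] [DecidableEq n]
    {A : Matrix n n ℂ} (hA : A.PosSemidef) : hA.sqrt.PosSemidef := by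
  have hd : PosSemidef (diagonal (((↑) : ℝ → ℂ) ∘ (Real.sqrt ∘ hA.1.eigenvalues))) :=
    PosSemidef.diagonal (fun i => by
      simp only [Function.comp_apply, Pi.zero_apply]
      exact Complex.zero_le_real.mpr (Real.sqrt_nonneg _))
  exact hd.mul_mul_conjTranspose_same (hA.1.eigenvectorUnitary : Matrix n n ℂ)

/-- The product `√X * Y * √X` is positive semidefinite. -/
theorem sqrt_mul_mul_sqrt_posSemidef {n : Type*} [Fintype n] [DecidableEq n]
    {X Y : Matrix n n ℂ} (hX : X.PosSemidef) (hY : Y.PosSemidef) :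
    (hX.sqrt * Y * hX.sqrt).PosSemidef := by
  have h := hY.conjTranspose_mul_mul_same (B := hX.sqrt)
  rwa [hX.posSemidef_sqrt.isHermitian.eq] at h

/-- The tracial geometric mean `tgm(X,Y) = trace √(√X·Y·√X)`. -/
noncomputable def tgm {n : Type*} [Fintype n] [DecidableEq n]
    {X Y : Matrix n n ℂ} (hX : X.PosSemidef) (hY : Y.PosSemidef) : ℝ :=
  ((sqrt_mul_mul_sqrt_posSemidef hX hY).sqrt.trace).re

namespace Matrix

variable {𝕜 n : Type*} [RCLike 𝕜] [Fintype n] [DecidableEq n]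

namespace PosSemidef

variable {A : Matrix n n 𝕜}

lemma sqrt_eq_conjStarAlgAut (hA : A.PosSemidef) :
    hA.sqrt = Unitary.conjStarAlgAut 𝕜 _ hA.1.eigenvectorUnitary
      (diagonal (RCLike.ofReal ∘ Real.sqrt ∘ hA.1.eigenvalues)) := by
  rw [Unitary.conjStarAlgAut_apply]; rfl

lemma sqrt_mul_sqrt (hA : A.PosSemidef) : hA.sqrt * hA.sqrt = A := by
  rw [sqrt_eq_conjStarAlgAut, ← map_mul, diagonal_mul_diagonal]
  conv_rhs => rw [hA.1.spectral_theorem]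
  congr 2
  funext i
  simp [← RCLike.ofReal_mul, Real.mul_self_sqrt (hA.eigenvalues_nonneg i)]

lemma re_trace_sqrt (hA : A.PosSemidef) :
    RCLike.re hA.sqrt.trace = ∑ i, √(hA.1.eigenvalues i) := by
  rw [sqrt_eq_conjStarAlgAut, Unitary.conjStarAlgAut_apply, trace_mul_cycle,
    Unitary.coe_star_mul_self, one_mul, trace_diagonal, map_sum]
  simp

lemma re_trace_sqrt_eq_of_charpoly_eq {B : Matrix n n 𝕜} (hA : A.PosSemidef)
    (hB : B.PosSemidef) (h : A.charpoly = B.charpoly) :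
    RCLike.re hA.sqrt.trace = RCLike.re hB.sqrt.trace := by
  rw [re_trace_sqrt, re_trace_sqrt, (hA.1.eigenvalues_eq_eigenvalues_iff hB.1).2 h]

end PosSemidef

lemma sum_norm_sq_row_eq_one_of_mem_unitaryGroup {U : Matrix n n 𝕜}
    (hU : U ∈ unitaryGroup n 𝕜) (i : n) : ∑ j, ‖U i j‖ ^ 2 = 1 := by
  have h := congrFun₂ (mem_unitaryGroup_iff.mp hU) i i
  simp only [mul_apply, star_apply, one_apply_eq, RCLike.star_def, RCLike.mul_conj] at h
  exact_mod_cast h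

lemma sum_norm_sq_col_eq_one_of_mem_unitaryGroup {U : Matrix n n 𝕜}
    (hU : U ∈ unitaryGroup n 𝕜) (j : n) : ∑ i, ‖U i j‖ ^ 2 = 1 := by
  simpa using sum_norm_sq_row_eq_one_of_mem_unitaryGroup (Unitary.star_mem hU) j

lemma re_star_mul_diagonal_mul_apply_self (M : Matrix n n 𝕜) (d : n → ℝ) (i : n) :
    RCLike.re ((star M * diagonal (RCLike.ofReal ∘ d : n → 𝕜) * M) i i) =
      ∑ j, ‖M j i‖ ^ 2 * d j := by
  rw [mul_apply, map_sum]
  refine Finset.sum_congr rfl fun j _ => ?_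
  rw [mul_diagonal, star_apply, mul_right_comm, RCLike.star_def, RCLike.conj_mul,
    Function.comp_apply, ← RCLike.ofReal_pow, ← RCLike.ofReal_mul, RCLike.ofReal_re]

lemma IsHermitian.eigenvalues_eq_re_star_mul_mul_apply_self {A : Matrix n n 𝕜}
    (hA : A.IsHermitian) (i : n) :
    hA.eigenvalues i = RCLike.re ((star (hA.eigenvectorUnitary : Matrix n n 𝕜) * A *
      hA.eigenvectorUnitary) i i) := by
  have h := hA.conjStarAlgAut_star_eigenvectorUnitary
  rw [Unitary.conjStarAlgAut_star_apply] at h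
  simp [h]

lemma PosSemidef.re_trace_sqrt_le_sum_sqrt {B : Matrix n n 𝕜} (hB : B.PosSemidef)
    (W : unitaryGroup n 𝕜) :
    RCLike.re hB.sqrt.trace ≤ ∑ i, √(RCLike.re ((star (W : Matrix n n 𝕜) * B * W) i i)) := by
  set U := hB.1.eigenvectorUnitary
  set V : Matrix n n 𝕜 := star (U : Matrix n n 𝕜) * W
  have hV : V ∈ unitaryGroup n 𝕜 := mul_mem (Unitary.star_mem U.2) W.2
  set D : Matrix n n 𝕜 := diagonal (RCLike.ofReal ∘ hB.1.eigenvalues)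
  have hspec : star (W : Matrix n n 𝕜) * B * W = star V * D * V := by
    have h : B = U * D * star (U : Matrix n n 𝕜) := hB.1.spectral_theorem
    calc star (W : Matrix n n 𝕜) * B * W
        = star (W : Matrix n n 𝕜) * (U * D * star (U : Matrix n n 𝕜)) * W := by
          rw [← h]
      _ = _ := by simp only [V, star_mul, star_star, mul_assoc]
  rw [re_trace_sqrt]
  calc ∑ j, √(hB.1.eigenvalues j)
      = ∑ j, (∑ i, ‖V j i‖ ^ 2) * √(hB.1.eigenvalues j) := by
        simp only [sum_norm_sq_row_eq_one_of_mem_unitaryGroup hV, one_mul]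
    _ = ∑ i, ∑ j, ‖V j i‖ ^ 2 • √(hB.1.eigenvalues j) := by
        simp only [Finset.sum_mul, smul_eq_mul]
        exact Finset.sum_comm
    _ ≤ ∑ i, √(∑ j, ‖V j i‖ ^ 2 • hB.1.eigenvalues j) :=
        Finset.sum_le_sum fun i _ => Real.strictConcaveOn_sqrt.concaveOn.le_map_sum
          (fun j _ => by positivity) (sum_norm_sq_col_eq_one_of_mem_unitaryGroup hV i)
          fun j _ => hB.eigenvalues_nonneg j
    _ = ∑ i, √(RCLike.re ((star (W : Matrix n n 𝕜) * B * W) i i)) := by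
        simp only [hspec, D, re_star_mul_diagonal_mul_apply_self, smul_eq_mul]

lemma PosSemidef.re_trace_sqrt_concave {P Q M : Matrix n n 𝕜} (hP : P.PosSemidef)
    (hQ : Q.PosSemidef) (hM : M.PosSemidef) {a b : ℝ} (ha : 0 ≤ a) (hb : 0 ≤ b)
    (hab : a + b = 1) (hM_eq : M = (a : 𝕜) • P + (b : 𝕜) • Q) :
    a * RCLike.re hP.sqrt.trace + b * RCLike.re hQ.sqrt.trace ≤ RCLike.re hM.sqrt.trace := by
  subst hM_eq
  set W := hM.1.eigenvectorUnitary
  set x : n → ℝ := fun i => RCLike.re ((star (W : Matrix n n 𝕜) * P * W) i i)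
  set y : n → ℝ := fun i => RCLike.re ((star (W : Matrix n n 𝕜) * Q * W) i i)
  have hx : ∀ i, 0 ≤ x i := fun i =>
    (RCLike.nonneg_iff.mp (hP.conjTranspose_mul_mul_same (W : Matrix n n 𝕜)).diag_nonneg).1
  have hy : ∀ i, 0 ≤ y i := fun i =>
    (RCLike.nonneg_iff.mp (hQ.conjTranspose_mul_mul_same (W : Matrix n n 𝕜)).diag_nonneg).1
  have heig : ∀ i, hM.1.eigenvalues i = a * x i + b * y i := fun i => by
    rw [hM.1.eigenvalues_eq_re_star_mul_mul_apply_self]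
    simp [x, y, W, mul_add, add_mul, RCLike.smul_re]
  calc a * RCLike.re hP.sqrt.trace + b * RCLike.re hQ.sqrt.trace
      ≤ a * ∑ i, √(x i) + b * ∑ i, √(y i) := by
        gcongr
        · exact hP.re_trace_sqrt_le_sum_sqrt W
        · exact hQ.re_trace_sqrt_le_sum_sqrt W
    _ = ∑ i, (a • √(x i) + b • √(y i)) := by
        simp only [Finset.sum_add_distrib, Finset.mul_sum, smul_eq_mul]
    _ ≤ ∑ i, √(a • x i + b • y i) :=
        Finset.sum_le_sum fun i _ =>
          Real.strictConcaveOn_sqrt.concaveOn.2 (hx i) (hy i) ha hb hab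
    _ = RCLike.re hM.sqrt.trace := by
        simp only [re_trace_sqrt, heig, smul_eq_mul]

end Matrix

theorem tgm_comm {n : Type*} [Fintype n] [DecidableEq n] {X Y : Matrix n n ℂ}
    (hX : X.PosSemidef) (hY : Y.PosSemidef) : tgm hX hY = tgm hY hX := by
  refine PosSemidef.re_trace_sqrt_eq_of_charpoly_eq
    (sqrt_mul_mul_sqrt_posSemidef hX hY) (sqrt_mul_mul_sqrt_posSemidef hY hX) ?_
  have h := charpoly_mul_comm (hX.sqrt * hY.sqrt) (hY.sqrt * hX.sqrt)
  rwa [mul_assoc, ← mul_assoc hY.sqrt, hY.sqrt_mul_sqrt, ← mul_assoc, mul_assoc hY.sqrt,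
    ← mul_assoc hX.sqrt, hX.sqrt_mul_sqrt, ← mul_assoc] at h

/-- For fixed positive semidefinite `Y`, the map `X ↦ tgm(X,Y)` is concave on the
positive semidefinite cone. -/
theorem tgm_concave_left {ℓ : ℕ} {X₁ X₂ Y : Matrix (Fin ℓ) (Fin ℓ) ℂ}
    (hX₁ : X₁.PosSemidef) (hX₂ : X₂.PosSemidef) (hY : Y.PosSemidef)
    {t : ℝ} (ht0 : 0 ≤ t) (ht1 : t ≤ 1)
    (hC : ((t : ℂ) • X₁ + ((1 - t : ℝ) : ℂ) • X₂).PosSemidef) :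
    t * tgm hX₁ hY + (1 - t) * tgm hX₂ hY ≤ tgm hC hY := by
  rw [tgm_comm hX₁, tgm_comm hX₂, tgm_comm hC]
  refine PosSemidef.re_trace_sqrt_concave (sqrt_mul_mul_sqrt_posSemidef hY hX₁)
    (sqrt_mul_mul_sqrt_posSemidef hY hX₂) (sqrt_mul_mul_sqrt_posSemidef hY hC)
    ht0 (sub_nonneg.2 ht1) (add_sub_cancel t 1) ?_
  simp only [mul_add, add_mul, mul_smul_comm, smul_mul_assoc]
  -- the sides differ only in the coercion `ℝ → ℂ` used: `Complex.ofReal` vs `RCLike.ofReal`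
  rfl
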